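/- Generalisation of stable models: for every extended program P, the extended WS-models and the extended RD-models of the singleton dynamic logic program ⟨P⟩ are exactly the stable models of P, i.e. WS'(⟨P⟩) = RD'(⟨P⟩) = SM(P). -/

import Mathlib

/-!
With a single component no rule is ever rejected, so both DLP semantics collapse to
single-program notions. An extended WS-model of `⟨P⟩` is a model of `P` whose atoms are
supported by rules of strictly smaller level: induction on the level puts `J*` inside
`least(P ∪ def(J))`, and conversely the stage at which an atom enters the Kleene iteration
of `least(P ∪ def(J))` is such a level mapping. For RD-models, `T_{P,J}` is the
immediate-consequence operator of `P ∪ def(J)` minus the literals contradicted by a rule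
whose body holds in `J*`; for a consistent `J`, no literal of `J*` being contradicted says
exactly that `J` is a model of `P`, so the two iterations agree.
-/

namespace RuleUpdates

/-- Objective literal: an atom (a natural number) or its strong negation. -/
inductive OLit where
  | pos : ℕ → OLit
  | neg : ℕ → OLit
deriving DecidableEq

/-- Strong negation on objective literals (with ¬¬p identified with p). -/
def OLit.compl : OLit → OLit
  | .pos p => .neg p
  | .neg p => .pos p

/-- Literal: an objective literal or its default negation (not not l = l). -/
inductive Lit where
  | obj : OLit → Lit
  | ndef : OLit → Lit
deriving DecidableEq

/-- Extended rule: a head literal and a finite set of body literals. -/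
structure Rule where
  head : Lit
  body : Finset Lit

/-- Interpretation: a consistent set of objective literals. -/
def Interp (J : Set OLit) : Prop :=
  ∀ p : ℕ, ¬ (OLit.pos p ∈ J ∧ OLit.neg p ∈ J)

/-- Satisfaction of a literal. -/
def satLit (J : Set OLit) : Lit → Prop
  | .obj l => l ∈ J
  | .ndef l => l ∉ J

/-- Satisfaction of a set of body literals. -/
def satBody (J : Set OLit) (B : Finset Lit) : Prop :=
  ∀ L ∈ B, satLit J L

/-- Satisfaction of a rule. -/
def satRule (J : Set OLit) (π : Rule) : Prop :=
  satBody J π.body → satLit J π.head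

/-- J is a model of a program. -/
def isModel (J : Set OLit) (P : Set Rule) : Prop :=
  ∀ π ∈ P, satRule J π

/-- J* = J ∪ { not l | l ∈ ℒ ∖ J }, as a set of literals. -/
def star (J : Set OLit) : Set Lit :=
  {L | ∃ l : OLit, (L = Lit.obj l ∧ l ∈ J) ∨ (L = Lit.ndef l ∧ l ∉ J)}

/-- def(J) = { (not l.) | l ∈ ℒ ∖ J }. -/
def defFacts (J : Set OLit) : Set Rule :=
  {π | ∃ l : OLit, l ∉ J ∧ π = ⟨Lit.ndef l, ∅⟩}

/-- S (a set of literals) is closed under program P, all literals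
treated as distinct propositional atoms. -/
def closedUnder (P : Set Rule) (S : Set Lit) : Prop :=
  ∀ π ∈ P, (π.body : Set Lit) ⊆ S → π.head ∈ S

/-- least(P): the least model of P when all literals are treated as
distinct propositional atoms. -/
def leastModel (P : Set Rule) : Set Lit :=
  ⋂₀ {S | closedUnder P S}

/-- Stable model of an extended program: J* = least(P ∪ def(J)). -/
def isStableModel (P : Set Rule) (J : Set OLit) : Prop :=
  Interp J ∧ star J = leastModel (P ∪ defFacts J)

/-- Level of a literal, with ℓ(not l) = ℓ(l). -/
def litLevel (ℓ : OLit → ℕ) : Lit → ℕ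
  | .obj l => ℓ l
  | .ndef l => ℓ l

/-- ℓ↑(S): the maximal level of a literal in the finite set S. -/
def supLevel (ℓ : OLit → ℕ) (S : Finset Lit) : ℕ :=
  S.sup (litLevel ℓ)

/-- ℓ↓(S): the minimal level of a literal in the finite set S. -/
noncomputable def infLevel (ℓ : OLit → ℕ) (S : Finset Lit) : ℕ :=
  sInf (litLevel ℓ '' (S : Set Lit))

/-- Well-supported model of an extended program w.r.t. a level mapping ℓ. -/
def isWSModelWith (P : Set Rule) (J : Set OLit) (ℓ : OLit → ℕ) : Prop :=
  isModel J P ∧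
    ∀ l ∈ J, ∃ π ∈ P, π.head = Lit.obj l ∧ satBody J π.body ∧
      supLevel ℓ π.body < ℓ l

/-- Well-supported model of an extended program. -/
def isWSModel (P : Set Rule) (J : Set OLit) : Prop :=
  Interp J ∧ ∃ ℓ : OLit → ℕ, isWSModelWith P J ℓ

/-- con(L): the literals in conflict with L. -/
def con : Lit → Finset Lit
  | .obj l => {Lit.ndef l, Lit.obj l.compl}
  | .ndef l => {Lit.obj l}

/-- ρ(P): all rules occurring in the components of the DLP. -/
def allRules {n : ℕ} (P : Fin n → Set Rule) : Set Rule :=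
  {π | ∃ i : Fin n, π ∈ P i}

/-- The rule π ∈ P i is rejected w.r.t. the set of literals S:
some later σ with conflicting head has its body included in S. -/
def rejIn {n : ℕ} (P : Fin n → Set Rule) (S : Set Lit) (i : Fin n) (π : Rule) : Prop :=
  ∃ j : Fin n, i < j ∧ ∃ σ ∈ P j, σ.head ∈ con π.head ∧ (σ.body : Set Lit) ⊆ S

/-- rem(P, S) = ρ(P) ∖ rej(P, S), as a set of component-indexed rules. -/
def remSet {n : ℕ} (P : Fin n → Set Rule) (S : Set Lit) : Set (Fin n × Rule) :=
  {x | x.2 ∈ P x.1 ∧ ¬ rejIn P S x.1 x.2}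

/-- The operator T_{P,J}. -/
def TOp {n : ℕ} (P : Fin n → Set Rule) (J : Set OLit) (S : Set Lit) : Set Lit :=
  {L | ((∃ x ∈ remSet P (star J), x.2.head = L ∧ (x.2.body : Set Lit) ⊆ S) ∨
        (∃ l : OLit, l ∉ J ∧ L = Lit.ndef l)) ∧
       ¬ ∃ σ ∈ remSet P S, σ.2.head ∈ con L ∧ (σ.2.body : Set Lit) ⊆ star J}

/-- Iterates of T_{P,J} starting from ∅. -/
def TIter {n : ℕ} (P : Fin n → Set Rule) (J : Set OLit) : ℕ → Set Lit
  | 0 => ∅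
  | k + 1 => TOp P J (TIter P J k)

/-- Extended RD-model of a DLP: J* = ⋃_{k≥0} T_{P,J}^k(∅). -/
def isExtRD {n : ℕ} (P : Fin n → Set Rule) (J : Set OLit) : Prop :=
  Interp J ∧ star J = ⋃ k : ℕ, TIter P J k

/-- rej^ℓ(P, J): π ∈ P i is rejected w.r.t. J and the level mapping ℓ. -/
def rejLvl {n : ℕ} (P : Fin n → Set Rule) (J : Set OLit) (ℓ : OLit → ℕ)
    (i : Fin n) (π : Rule) : Prop :=
  ∃ j : Fin n, i < j ∧ ∃ σ ∈ P j, σ.head ∈ con π.head ∧ satBody J σ.body ∧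
    supLevel ℓ σ.body < infLevel ℓ (con π.head)

/-- Extended WS-model of a DLP. -/
def isExtWS {n : ℕ} (P : Fin n → Set Rule) (J : Set OLit) : Prop :=
  Interp J ∧ ∃ ℓ : OLit → ℕ,
    (∀ i : Fin n, ∀ π ∈ P i, ¬ rejLvl P J ℓ i π → satRule J π) ∧
    (∀ l ∈ J, ∃ x ∈ remSet P (star J), x.2.head = Lit.obj l ∧ satBody J x.2.body ∧
      supLevel ℓ x.2.body < ℓ l)

/-- A program is acyclic w.r.t. a level mapping ℓ. -/
def acyclicWrt (Q : Set Rule) (ℓ : OLit → ℕ) : Prop :=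
  (∀ l : OLit, ℓ l = ℓ l.compl) ∧ ∀ π ∈ Q, supLevel ℓ π.body < litLevel ℓ π.head

section Star

variable {J : Set OLit}

@[simp]
lemma obj_mem_star {l : OLit} : Lit.obj l ∈ star J ↔ l ∈ J := by
  simp [star]

@[simp]
lemma ndef_mem_star {l : OLit} : Lit.ndef l ∈ star J ↔ l ∉ J := by
  simp [star]

lemma satLit_iff_mem_star : ∀ {L : Lit}, satLit J L ↔ L ∈ star J
  | .obj _ => obj_mem_star.symm
  | .ndef _ => ndef_mem_star.symm

lemma satBody_iff_subset_star {B : Finset Lit} : satBody J B ↔ (B : Set Lit) ⊆ star J :=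
  ⟨fun h _ hL => satLit_iff_mem_star.1 (h _ hL), fun h _ hL => satLit_iff_mem_star.2 (h hL)⟩

lemma Interp.compl_notMem (hJ : Interp J) {l : OLit} (hl : l ∈ J) : l.compl ∉ J := by
  cases l with
  | pos p => exact fun hc => hJ p ⟨hl, hc⟩
  | neg p => exact fun hc => hJ p ⟨hc, hl⟩

lemma exists_mem_star_mem_con_of_notMem_star {L : Lit} (hL : L ∉ star J) :
    ∃ L' ∈ star J, L ∈ con L' := by
  cases L with
  | obj l => exact ⟨.ndef l, by simpa using hL, by simp [con]⟩
  | ndef l => exact ⟨.obj l, by simpa using hL, by simp [con]⟩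

lemma Interp.notMem_star_of_mem_con (hJ : Interp J) {L L' : Lit} (hL' : L' ∈ star J)
    (h : L ∈ con L') : L ∉ star J := by
  cases L' with
  | obj l =>
    simp only [con, Finset.mem_insert, Finset.mem_singleton] at h
    rcases h with rfl | rfl
    · simpa using hL'
    · simpa using hJ.compl_notMem (obj_mem_star.1 hL')
  | ndef l =>
    simp only [con, Finset.mem_singleton] at h
    subst h
    simpa using hL'

end Star

section LeastModel

variable (Q : Set Rule)

lemma closedUnder_leastModel : closedUnder Q (leastModel Q) :=
  fun π hπ hb _ hS => hS π hπ (hb.trans (Set.sInter_subset_of_mem hS))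

variable {Q} in
lemma leastModel_subset_of_closedUnder {S : Set Lit} (h : closedUnder Q S) :
    leastModel Q ⊆ S :=
  Set.sInter_subset_of_mem h

def immConseq (S : Set Lit) : Set Lit :=
  {L | ∃ π ∈ Q, π.head = L ∧ (π.body : Set Lit) ⊆ S}

def immConseqIter : ℕ → Set Lit
  | 0 => ∅
  | k + 1 => immConseq Q (immConseqIter k)

lemma immConseq_mono : Monotone (immConseq Q) :=
  fun _ _ hST _ ⟨π, hπ, hh, hb⟩ => ⟨π, hπ, hh, hb.trans hST⟩

lemma immConseqIter_mono : Monotone (immConseqIter Q) := by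
  refine monotone_nat_of_le_succ fun k => ?_
  induction k with
  | zero => exact Set.empty_subset _
  | succ k ih => exact immConseq_mono Q ih

lemma immConseqIter_subset_leastModel (k : ℕ) : immConseqIter Q k ⊆ leastModel Q := by
  induction k with
  | zero => exact Set.empty_subset _
  | succ k ih =>
    rintro L ⟨π, hπ, rfl, hb⟩
    exact closedUnder_leastModel Q π hπ (hb.trans ih)

lemma leastModel_eq_iUnion_immConseqIter : leastModel Q = ⋃ k, immConseqIter Q k := by
  refine subset_antisymm (leastModel_subset_of_closedUnder fun π hπ hb => ?_)
    (Set.iUnion_subset (immConseqIter_subset_leastModel Q))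
  -- A rule body is finite, so it already lies in one stage of the increasing iteration.
  obtain ⟨k, hk⟩ :=
    (immConseqIter_mono Q).directed_le.exists_mem_subset_of_finset_subset_biUnion hb
  exact Set.mem_iUnion.2 ⟨k + 1, π, hπ, rfl, hk⟩

/-- The first stage of the iteration containing `L`; the junk value `sInf ∅ = 0` when
`L ∉ leastModel Q`. -/
noncomputable def stage (L : Lit) : ℕ :=
  sInf {k | L ∈ immConseqIter Q k}

variable {Q}

lemma stage_le {L : Lit} {k : ℕ} (h : L ∈ immConseqIter Q k) : stage Q L ≤ k :=
  Nat.sInf_le h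

lemma stage_eq_zero_of_notMem {L : Lit} (h : L ∉ leastModel Q) : stage Q L = 0 := by
  rw [leastModel_eq_iUnion_immConseqIter, Set.mem_iUnion, not_exists] at h
  simp [stage, h]

lemma exists_rule_of_mem_leastModel {L : Lit} (h : L ∈ leastModel Q) :
    ∃ k, stage Q L = k + 1 ∧
      ∃ π ∈ Q, π.head = L ∧ (π.body : Set Lit) ⊆ immConseqIter Q k := by
  rw [leastModel_eq_iUnion_immConseqIter] at h
  have hmem : L ∈ immConseqIter Q (stage Q L) := Nat.sInf_mem (Set.mem_iUnion.1 h)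
  cases hs : stage Q L with
  | zero => simp [hs, immConseqIter] at hmem
  | succ k => exact ⟨k, rfl, by simpa [hs, immConseqIter, immConseq] using hmem⟩

end LeastModel

section SingleProgram

variable {P : Set Rule} {J : Set OLit}

lemma mem_remSet_single {S : Set Lit} {x : Fin 1 × Rule} :
    x ∈ remSet (fun _ : Fin 1 => P) S ↔ x.2 ∈ P := by
  refine ⟨And.left, fun hx => ⟨hx, ?_⟩⟩
  rintro ⟨j, hj, -⟩
  exact hj.ne (Subsingleton.elim _ _)

lemma not_rejLvl_single {ℓ : OLit → ℕ} {i : Fin 1} {π : Rule} :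
    ¬ rejLvl (fun _ : Fin 1 => P) J ℓ i π := by
  rintro ⟨j, hj, -⟩
  exact hj.ne (Subsingleton.elim _ _)

lemma isExtWS_single_iff : isExtWS (fun _ : Fin 1 => P) J ↔ isWSModel P J := by
  simp only [isExtWS, isWSModel, isWSModelWith, isModel, mem_remSet_single, Prod.exists,
    exists_const]
  exact and_congr_right fun _ => exists_congr fun _ => and_congr_left fun _ =>
    ⟨fun h π hπ => h 0 π hπ not_rejLvl_single, fun h _ π hπ _ => h π hπ⟩

lemma closedUnder_star_iff : closedUnder (P ∪ defFacts J) (star J) ↔ isModel J P := by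
  refine ⟨fun h π hπ hb => ?_, fun h π hπ hb => ?_⟩
  · exact satLit_iff_mem_star.2 (h π (Or.inl hπ) (satBody_iff_subset_star.1 hb))
  · rcases hπ with hπ | ⟨l, hl, rfl⟩
    · exact satLit_iff_mem_star.1 (h π hπ (satBody_iff_subset_star.2 hb))
    · exact ndef_mem_star.2 hl

lemma isStableModel_iff : isStableModel P J ↔
    Interp J ∧ isModel J P ∧ star J ⊆ leastModel (P ∪ defFacts J) := by
  refine ⟨fun ⟨hJ, h⟩ => ⟨hJ, ?_, h.le⟩, fun ⟨hJ, hm, h⟩ => ⟨hJ, ?_⟩⟩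
  · exact closedUnder_star_iff.1 (h ▸ closedUnder_leastModel _)
  · exact h.antisymm (leastModel_subset_of_closedUnder (closedUnder_star_iff.2 hm))

lemma star_subset_leastModel_of_isWSModelWith {ℓ : OLit → ℕ} (h : isWSModelWith P J ℓ) :
    star J ⊆ leastModel (P ∪ defFacts J) := by
  have ndef_mem : ∀ l ∉ J, Lit.ndef l ∈ leastModel (P ∪ defFacts J) := fun l hl =>
    closedUnder_leastModel _ ⟨.ndef l, ∅⟩ (Or.inr ⟨l, hl, rfl⟩) (by simp)
  have obj_mem : ∀ n, ∀ l ∈ J, ℓ l = n → Lit.obj l ∈ leastModel (P ∪ defFacts J) := by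
    intro n
    induction n using Nat.strong_induction_on with
    | _ n ih =>
      rintro l hl rfl
      obtain ⟨π, hπ, hh, hsat, hlt⟩ := h.2 l hl
      refine hh ▸ closedUnder_leastModel _ π (Or.inl hπ) fun L hL => ?_
      cases L with
      | obj m =>
        exact ih _ ((Finset.le_sup (f := litLevel ℓ) hL).trans_lt hlt) m (hsat _ hL) rfl
      | ndef m => exact ndef_mem m (hsat _ hL)
  rintro L ⟨l, ⟨rfl, hl⟩ | ⟨rfl, hl⟩⟩
  · exact obj_mem _ l hl rfl
  · exact ndef_mem l hl

lemma isStableModel.isWSModelWith_stage (h : isStableModel P J) :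
    isWSModelWith P J (fun l => stage (P ∪ defFacts J) (.obj l)) := by
  refine ⟨(isStableModel_iff.1 h).2.1, fun l hl => ?_⟩
  obtain ⟨k, hk, π, hπ, hh, hb⟩ := exists_rule_of_mem_leastModel (h.2 ▸ obj_mem_star.2 hl)
  have hb_star : (π.body : Set Lit) ⊆ star J :=
    h.2 ▸ hb.trans (immConseqIter_subset_leastModel _ k)
  have hπP : π ∈ P := hπ.resolve_right fun ⟨_, _, hd⟩ => by simp [hd] at hh
  refine ⟨π, hπP, hh, satBody_iff_subset_star.2 hb_star, ?_⟩
  beta_reduce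
  rw [hk, Nat.lt_succ_iff]
  refine Finset.sup_le fun L hL => ?_
  cases L with
  | obj m => exact stage_le (hb hL)
  | ndef m =>
    have hm : Lit.obj m ∉ leastModel (P ∪ defFacts J) := by
      simpa [← h.2] using hb_star hL
    simp [litLevel, stage_eq_zero_of_notMem hm]

theorem isWSModel_iff_isStableModel : isWSModel P J ↔ isStableModel P J :=
  ⟨fun ⟨hJ, _, hℓ⟩ => isStableModel_iff.2
      ⟨hJ, hℓ.1, star_subset_leastModel_of_isWSModelWith hℓ⟩,
    fun h => ⟨h.1, _, h.isWSModelWith_stage⟩⟩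

/-- For the DLP `⟨P⟩`, the literals discarded by the side condition of `T_{P,J}`. -/
def blocked (P : Set Rule) (J : Set OLit) : Set Lit :=
  {L | ∃ σ ∈ P, σ.head ∈ con L ∧ (σ.body : Set Lit) ⊆ star J}

lemma TOp_single (S : Set Lit) :
    TOp (fun _ : Fin 1 => P) J S = immConseq (P ∪ defFacts J) S \ blocked P J := by
  ext L
  simp only [TOp, mem_remSet_single, Prod.exists, exists_const, immConseq, blocked, defFacts,
    Set.mem_sdiff, Set.mem_ofPred_eq, Set.mem_union]
  refine and_congr_left fun _ => ⟨?_, ?_⟩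
  · rintro (⟨π, hπ, hh, hb⟩ | ⟨l, hl, rfl⟩)
    · exact ⟨π, Or.inl hπ, hh, hb⟩
    · exact ⟨_, Or.inr ⟨l, hl, rfl⟩, rfl, by simp⟩
  · rintro ⟨π, hπ | ⟨l, hl, rfl⟩, hh, hb⟩
    · exact Or.inl ⟨π, hπ, hh, hb⟩
    · exact Or.inr ⟨l, hl, hh.symm⟩

lemma Interp.disjoint_star_blocked_iff (hJ : Interp J) :
    Disjoint (star J) (blocked P J) ↔ isModel J P := by
  refine ⟨fun h π hπ hb => ?_, fun hm => Set.disjoint_left.2 ?_⟩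
  · by_contra hhead
    obtain ⟨L, hL, hcon⟩ :=
      exists_mem_star_mem_con_of_notMem_star (satLit_iff_mem_star.not.1 hhead)
    exact Set.disjoint_left.1 h hL ⟨π, hπ, hcon, satBody_iff_subset_star.1 hb⟩
  · rintro L hL ⟨σ, hσ, hcon, hb⟩
    exact hJ.notMem_star_of_mem_con hL hcon
      (satLit_iff_mem_star.1 (hm σ hσ (satBody_iff_subset_star.2 hb)))

lemma TIter_single_subset (k : ℕ) :
    TIter (fun _ : Fin 1 => P) J k ⊆ immConseqIter (P ∪ defFacts J) k := by
  induction k with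
  | zero => exact Set.empty_subset _
  | succ k ih =>
    rw [TIter, TOp_single]
    exact Set.sdiff_subset.trans (immConseq_mono _ ih)

lemma disjoint_iUnion_TIter_single_blocked :
    Disjoint (⋃ k, TIter (fun _ : Fin 1 => P) J k) (blocked P J) := by
  refine Set.disjoint_iUnion_left.2 fun k => ?_
  cases k with
  | zero => exact Set.empty_disjoint _
  | succ k =>
    rw [TIter, TOp_single]
    exact Set.disjoint_sdiff_left

lemma TIter_single_eq (h : Disjoint (leastModel (P ∪ defFacts J)) (blocked P J)) (k : ℕ) :
    TIter (fun _ : Fin 1 => P) J k = immConseqIter (P ∪ defFacts J) k := by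
  induction k with
  | zero => rfl
  | succ k ih =>
    rw [TIter, TOp_single, ih, immConseqIter, sdiff_eq_left]
    exact h.mono_left (immConseqIter_subset_leastModel _ (k + 1))

theorem isExtRD_single_iff : isExtRD (fun _ : Fin 1 => P) J ↔ isStableModel P J := by
  refine ⟨fun ⟨hJ, hRD⟩ => isStableModel_iff.2 ⟨hJ, ?_, ?_⟩, fun h => ⟨h.1, ?_⟩⟩
  · exact hJ.disjoint_star_blocked_iff.1 (hRD ▸ disjoint_iUnion_TIter_single_blocked)
  · rw [hRD, leastModel_eq_iUnion_immConseqIter]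
    exact Set.iUnion_mono TIter_single_subset
  · have hdisj := h.1.disjoint_star_blocked_iff.2 (isStableModel_iff.1 h).2.1
    rw [h.2] at hdisj
    simp_rw [TIter_single_eq hdisj, h.2, leastModel_eq_iUnion_immConseqIter]

end SingleProgram

/-- generalisation of stable models:
WS'(⟨P⟩) = RD'(⟨P⟩) = SM(P). -/
theorem generalisation_of_stable_models (P : Set Rule) :
    {J : Set OLit | isExtWS (fun _ : Fin 1 => P) J} = {J : Set OLit | isStableModel P J} ∧
    {J : Set OLit | isExtRD (fun _ : Fin 1 => P) J} = {J : Set OLit | isStableModel P J} :=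
  ⟨Set.ext fun _ => isExtWS_single_iff.trans isWSModel_iff_isStableModel,
    Set.ext fun _ => isExtRD_single_iff⟩

end RuleUpdates
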